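/- arXiv:2305.11011 — 4 statements merged into one kernel-verified Lean document; each statement's English description precedes it below -/
import Mathlib

section
/- Define h : {(x,y) ∈ ℝ² : 0 ≤ x ≤ y ≤ 1} → ℝ by h(x,y) = (2/3)·max(x+y-1, 0) + (1/6)·max(5x+3y-2, 0) + 2/3. Then for all θ₁, θ₂, θ₃ with 0 ≤ θ₁ ≤ θ₂ ≤ θ₃ ≤ 1, writing s = max(θ₁+θ₂+θ₃, 1), we have 2·s ≤ h(θ₁,θ₂) + h(θ₁,θ₃) + h(θ₂,θ₃) (the non-deficit constraint for 3 agents). -/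
noncomputable def h1 (x y : ℝ) : ℝ :=
  2 / 3 * max (x + y - 1) 0 + 1 / 6 * max (5 * x + 3 * y - 2) 0 + 2 / 3

/-! Bounding each `max z 0` below by `0` or by `z` gives affine minorants of
`h1 a b + h1 a c + h1 b c`. Dropping every ramp gives `2`. Keeping the ramp `5x + 3y - 2` in all
three terms together with `b + c - 1` gives a minorant that exceeds `2 (a + b + c)` by
`(1 - (a + c)) / 3`; adding also `a + c - 1` gives one that exceeds it by `(a + c - 1) / 3`. -/

section LowerBounds

variable (x y : ℝ)

theorem two_thirds_le_h1 : 2 / 3 ≤ h1 x y := by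
  unfold h1
  linarith [le_max_right (x + y - 1) 0, le_max_right (5 * x + 3 * y - 2) 0]

theorem second_ramp_le_h1 : 1 / 6 * (5 * x + 3 * y - 2) + 2 / 3 ≤ h1 x y := by
  unfold h1
  linarith [le_max_right (x + y - 1) 0, le_max_left (5 * x + 3 * y - 2) 0]

theorem both_ramps_le_h1 :
    2 / 3 * (x + y - 1) + 1 / 6 * (5 * x + 3 * y - 2) + 2 / 3 ≤ h1 x y := by
  unfold h1
  linarith [le_max_left (x + y - 1) 0, le_max_left (5 * x + 3 * y - 2) 0]

end LowerBounds

section NonDeficit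

variable (a b c : ℝ)

theorem two_le_sum_h1 : 2 ≤ h1 a b + h1 a c + h1 b c := by
  linarith [two_thirds_le_h1 a b, two_thirds_le_h1 a c, two_thirds_le_h1 b c]

theorem two_mul_sum_le_sum_h1 : 2 * (a + b + c) ≤ h1 a b + h1 a c + h1 b c := by
  rcases le_total (a + c) 1 with hac | hac
  · linarith [second_ramp_le_h1 a b, second_ramp_le_h1 a c, both_ramps_le_h1 b c]
  · linarith [second_ramp_le_h1 a b, both_ramps_le_h1 a c, both_ramps_le_h1 b c]

theorem two_mul_max_le_sum_h1 : 2 * max (a + b + c) 1 ≤ h1 a b + h1 a c + h1 b c := by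
  rcases max_choice (a + b + c) 1 with hmax | hmax <;> rw [hmax]
  · exact two_mul_sum_le_sum_h1 a b c
  · linarith [two_le_sum_h1 a b c]

end NonDeficit

theorem stmt_1 : ∀ θ₁ θ₂ θ₃ : ℝ, 0 ≤ θ₁ → θ₁ ≤ θ₂ → θ₂ ≤ θ₃ → θ₃ ≤ 1 →
    2 * max (θ₁ + θ₂ + θ₃) 1 ≤ h1 θ₁ θ₂ + h1 θ₁ θ₃ + h1 θ₂ θ₃ :=
  fun θ₁ θ₂ θ₃ _ _ _ _ => two_mul_max_le_sum_h1 θ₁ θ₂ θ₃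
end

section
/- Define h : {(x,y) ∈ ℝ² : 0 ≤ x ≤ y ≤ 1} → ℝ by h(x,y) = (2/3)·max(x+y-1, 0) + (1/6)·max(5x+3y-2, 0) + 2/3. Then for all θ₁, θ₂, θ₃ with 0 ≤ θ₁ ≤ θ₂ ≤ θ₃ ≤ 1, writing s = max(θ₁+θ₂+θ₃, 1), we have h(θ₁,θ₂) + h(θ₁,θ₃) + h(θ₂,θ₃) ≤ (7/3)·s. Consequently, this mechanism achieves worst-case allocative efficiency ratio α = 2/3, since 3 - α = 7/3. -/
theorem stmt_2 : ∀ θ₁ θ₂ θ₃ : ℝ, 0 ≤ θ₁ → θ₁ ≤ θ₂ → θ₂ ≤ θ₃ → θ₃ ≤ 1 →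
    h1 θ₁ θ₂ + h1 θ₁ θ₃ + h1 θ₂ θ₃ ≤ 7 / 3 * max (θ₁ + θ₂ + θ₃) 1 := by
  intro a b c ha hab hbc hc
  have hsum : a + b + c ≤ max (a + b + c) 1 := le_max_left _ _
  have hone : 1 ≤ max (a + b + c) 1 := le_max_right _ _
  simp only [h1]
  rcases max_cases (a + b - 1) 0 with h | h <;>
  rcases max_cases (a + c - 1) 0 with h | h <;>
  rcases max_cases (b + c - 1) 0 with h | h <;>
  rcases max_cases (5 * a + 3 * b - 2) 0 with h | h <;>
  rcases max_cases (5 * a + 3 * c - 2) 0 with h | h <;>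
  rcases max_cases (5 * b + 3 * c - 2) 0 with h | h <;>
  linarith
end

section
/- Let h : {(x,y) : 0 ≤ x ≤ y ≤ 1} → ℝ be any function and α ∈ ℝ. Suppose for all 0 ≤ θ₁ ≤ θ₂ ≤ θ₃ ≤ 1, writing s = max(θ₁+θ₂+θ₃, 1), we have 2s ≤ h(θ₁,θ₂) + h(θ₁,θ₃) + h(θ₂,θ₃) ≤ (3-α)·s. Then α ≤ 2/3. (In particular, 2/3 is an upper bound on the worst-case allocative efficiency ratio of any VCG redistribution mechanism for 3 agents.) -/
theorem stmt_3 (h : ℝ → ℝ → ℝ) (α : ℝ)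
    (H : ∀ θ₁ θ₂ θ₃ : ℝ, 0 ≤ θ₁ → θ₁ ≤ θ₂ → θ₂ ≤ θ₃ → θ₃ ≤ 1 →
      2 * max (θ₁ + θ₂ + θ₃) 1 ≤ h θ₁ θ₂ + h θ₁ θ₃ + h θ₂ θ₃ ∧
      h θ₁ θ₂ + h θ₁ θ₃ + h θ₂ θ₃ ≤ (3 - α) * max (θ₁ + θ₂ + θ₃) 1) :
    α ≤ 2 / 3 := by
  have h00 : 2 / 3 ≤ h 0 0 := by
    have := (H 0 0 0 le_rfl le_rfl le_rfl zero_le_one).1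
    norm_num at this
    linarith
  have h11 : h 1 1 ≤ 3 - α := by
    have := (H 1 1 1 zero_le_one le_rfl le_rfl le_rfl).2
    norm_num at this
    linarith
  have h01_lower : 4 ≤ 2 * h 0 1 + h 1 1 := by
    have := (H 0 1 1 le_rfl zero_le_one le_rfl le_rfl).1
    norm_num at this
    linarith
  have h01_upper : 2 * h 0 1 + h 0 0 ≤ 3 - α := by
    have := (H 0 0 1 le_rfl le_rfl zero_le_one le_rfl).2
    norm_num at this
    linarith
  linarith
end

section
/- Let h : {(x,y) : 0 ≤ x ≤ y ≤ 1} → ℝ be defined by h(x,y) = (2/3)·max(x+y−1, 0) + (1/6)·max(5x+3y−2, 0) + 2/3. Then the mechanism constraints are tight at the extreme profiles: at θ = (0,0,0) we have h(0,0)·3 = 2 = 2·s(θ) (non-deficit binds), and at θ = (1,1,1) we have 3·h(1,1) = 7 = (3 − 2/3)·s(θ) (the efficiency-ratio constraint with α = 2/3 binds). Hence the worst-case allocative efficiency ratio of this mechanism is exactly 2/3 and cannot be improved. -/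
lemma h1_zero_zero : h1 0 0 = 2 / 3 := by norm_num [h1]

lemma h1_one_one : h1 1 1 = 7 / 3 := by norm_num [h1]

theorem stmt_15 :
    3 * h1 0 0 = 2 * max ((0 : ℝ) + 0 + 0) 1 ∧
    3 * h1 1 1 = (3 - 2 / 3) * max ((1 : ℝ) + 1 + 1) 1 ∧
    (∀ α : ℝ, (∀ θ₁ θ₂ θ₃ : ℝ, 0 ≤ θ₁ → θ₁ ≤ θ₂ → θ₂ ≤ θ₃ → θ₃ ≤ 1 →
        h1 θ₁ θ₂ + h1 θ₁ θ₃ + h1 θ₂ θ₃ ≤ (3 - α) * max (θ₁ + θ₂ + θ₃) 1) →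
      α ≤ 2 / 3) := by
  refine ⟨by norm_num [h1_zero_zero], by norm_num [h1_one_one], fun α hα => ?_⟩
  have at_one := hα 1 1 1 zero_le_one le_rfl le_rfl le_rfl
  norm_num [h1_one_one] at at_one
  linarith
end
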